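/- arXiv:2505.10439 — 4 statements merged into one kernel-verified Lean document; each statement's English description precedes it below -/
import Mathlib

section
/- For every permutation σ of Fin m and every λ : Fin m → ℤ, the trace of the matrix product P_σ · E_1(λ) · E_2(λ) ⋯ E_m(λ) over the free algebra A equals Σ_{i : Fin m → Fin n} e(i(1), i(σ⁻¹(1)), λ(1)) · e(i(2), i(σ⁻¹(2)), λ(2)) ⋯ e(i(m), i(σ⁻¹(m)), λ(m)), where the product on the right is taken in increasing order of the slot index k = 1, …, m. (This is the paper's basis-free realization, in the general linear case, of Molev's full partial trace tr_{1,…,m} P_σ E[−λ_1]_{1,m} ⋯ E[−λ_m]_{m,m} inside the tensor algebra T(gl_n[t⁻¹]t⁻¹).) -/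
/-- The generator `e(i,j,r)`, modeling `E_{ij} t^{-r}` inside the tensor algebra
`T(gl_n[t⁻¹]t⁻¹)`. -/
noncomputable def glGen (n : ℕ) (i j : Fin n) (r : ℤ) :
    FreeAlgebra ℂ (Fin n × Fin n × ℤ) :=
  FreeAlgebra.ι ℂ (i, j, r)

/-- The permutation matrix `P_σ` acting on `(ℂⁿ)^{⊗m}`. -/
noncomputable def permMat (n m : ℕ) (σ : Equiv.Perm (Fin m)) :
    Matrix (Fin m → Fin n) (Fin m → Fin n) (FreeAlgebra ℂ (Fin n × Fin n × ℤ)) :=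
  Matrix.of fun f g => if g = fun j => f (σ j) then 1 else 0

/-- The matrix `E[-λ_k]_{k,m}` acting in the `k`-th tensor slot. -/
noncomputable def Emat (n m : ℕ) (lam : Fin m → ℤ) (k : Fin m) :
    Matrix (Fin m → Fin n) (Fin m → Fin n) (FreeAlgebra ℂ (Fin n × Fin n × ℤ)) :=
  Matrix.of fun f g =>
    if ∀ j : Fin m, j ≠ k → f j = g j then glGen n (f k) (g k) (lam k) else 0

/-! For distinct slots `k₁, …, k_r`, the `(f, g)` entry of `E_{k₁} ⋯ E_{k_r}` vanishes unless
`f` and `g` agree outside these slots, and otherwise is the ordered product of the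
`e(f k, g k, λ k)`: multiplying by `E_k` on the left sums over the possible values of the `k`-th
coordinate, and only one of them survives. Since `P_σ` has a single nonzero entry per row, the
trace becomes `∑_f M (f ∘ σ) f`, and the substitution `i = f ∘ σ` gives the claim. -/

open Function

variable {n m : ℕ}

theorem Emat_apply_update (lam : Fin m → ℤ) (k : Fin m) (f : Fin m → Fin n) (a : Fin n) :
    Emat n m lam k f (update f k a) = glGen n (f k) a (lam k) := by
  rw [Emat, Matrix.of_apply, if_pos fun j hj => (update_of_ne hj _ _).symm, update_self]

theorem Emat_mul_apply (lam : Fin m → ℤ) (k : Fin m)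
    (M : Matrix (Fin m → Fin n) (Fin m → Fin n) (FreeAlgebra ℂ (Fin n × Fin n × ℤ)))
    (f g : Fin m → Fin n) :
    (Emat n m lam k * M) f g = ∑ a, glGen n (f k) a (lam k) * M (update f k a) g := by
  rw [Matrix.mul_apply]
  refine (Fintype.sum_of_injective (update f k) (update_injective f k) _ _ ?_ ?_).symm
  · intro h hh
    have hfh : ¬ ∀ j, j ≠ k → f j = h j := fun hfh =>
      hh ⟨h k, update_eq_iff.mpr ⟨rfl, hfh⟩⟩
    simp [Emat, hfh]
  · intro a
    rw [Emat_apply_update]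

theorem Emat_list_prod_apply (lam : Fin m → ℤ) {L : List (Fin m)} (hL : L.Nodup)
    (f g : Fin m → Fin n) :
    (L.map (Emat n m lam)).prod f g =
      if ∀ j ∉ L, f j = g j then (L.map fun k => glGen n (f k) (g k) (lam k)).prod else 0 := by
  induction L generalizing f with
  | nil => simp [Matrix.one_apply, funext_iff, eq_comm]
  | cons k L ih =>
    obtain ⟨hk, hL⟩ := List.nodup_cons.mp hL
    rw [List.map_cons, List.prod_cons, Emat_mul_apply, Finset.sum_eq_single (g k)]
    · have hcond : (∀ j ∉ L, update f k (g k) j = g j) ↔ ∀ j ∉ k :: L, f j = g j := by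
        rw [forall_update_iff f fun j b => j ∉ L → b = g j]
        simp only [List.mem_cons, not_or, hk, not_false_eq_true, true_imp_iff, true_and]
        exact forall_congr' fun j => by tauto
      have hprod : (L.map fun j => glGen n (update f k (g k) j) (g j) (lam j)) =
          L.map fun j => glGen n (f j) (g j) (lam j) :=
        List.map_congr_left fun j hj => by rw [update_of_ne (ne_of_mem_of_not_mem hj hk)]
      simp only [ih hL, hcond, hprod, mul_ite, mul_zero, List.map_cons, List.prod_cons]
    · intro a _ ha
      rw [ih hL, if_neg fun h => ha (by simpa using h k hk), mul_zero]
    · simp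

theorem Emat_ofFn_prod_apply (lam : Fin m → ℤ) (f g : Fin m → Fin n) :
    (List.ofFn (Emat n m lam)).prod f g =
      (List.ofFn fun k => glGen n (f k) (g k) (lam k)).prod := by
  rw [List.ofFn_eq_map, List.ofFn_eq_map, Emat_list_prod_apply lam (List.nodup_finRange m),
    if_pos fun j hj => absurd (List.mem_finRange j) hj]

theorem trace_permMat_mul (σ : Equiv.Perm (Fin m))
    (M : Matrix (Fin m → Fin n) (Fin m → Fin n) (FreeAlgebra ℂ (Fin n × Fin n × ℤ))) :
    (permMat n m σ * M).trace = ∑ f, M (f ∘ σ) f := by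
  refine Finset.sum_congr rfl fun f _ => ?_
  simp [Matrix.mul_apply, permMat, comp_def]

theorem trace_permMat_mul_EmatProd_general (n m : ℕ)
    (σ : Equiv.Perm (Fin m)) (lam : Fin m → ℤ) :
    Matrix.trace (permMat n m σ * (List.ofFn fun k => Emat n m lam k).prod) =
      ∑ i : Fin m → Fin n,
        (List.ofFn fun k => glGen n (i k) (i (σ⁻¹ k)) (lam k)).prod := by
  rw [trace_permMat_mul]
  refine Fintype.sum_equiv (Equiv.arrowCongr σ.symm (Equiv.refl (Fin n))) _ _ fun f => ?_
  rw [Emat_ofFn_prod_apply]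
  congr! 3 with k
  simp [Equiv.arrowCongr_apply]

/-- Basis-free realization of Molev's full partial trace
`tr_{1,…,m} P_σ E[-λ_1]_{1,m} ⋯ E[-λ_m]_{m,m}` in Type A. -/
theorem trace_permMat_mul_EmatProd (n m : ℕ) (hn : 1 ≤ n) (hm : 1 ≤ m)
    (σ : Equiv.Perm (Fin m)) (lam : Fin m → ℤ) :
    Matrix.trace (permMat n m σ * (List.ofFn fun k => Emat n m lam k).prod) =
      ∑ i : Fin m → Fin n,
        (List.ofFn fun k => glGen n (i k) (i (σ⁻¹ k)) (lam k)).prod :=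
  trace_permMat_mul_EmatProd_general n m σ lam
end

section
/- For every permutation σ of Fin m and every λ : Fin m → ℤ, the trace of the matrix product P_σ · F_1(λ) · F_2(λ) ⋯ F_m(λ) over the free algebra A equals Σ_{i : Fin m → Fin 2n} F(i(1), i(σ⁻¹(1)), λ(1)) · F(i(2), i(σ⁻¹(2)), λ(2)) ⋯ F(i(m), i(σ⁻¹(m)), λ(m)), where the product on the right is taken in increasing order of the slot index k = 1, …, m. (This is the paper's trace identity for the symplectic (Type C) twisted generators F_{ij}, realizing tr_{1,…,m} P_σ F[−λ_1]_{1,m} ⋯ F[−λ_m]_{m,m} inside T(sp_{2n}[t⁻¹]t⁻¹).) -/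
/-- The sign `ε(i)`: `1` on the first `n` indices, `-1` on the last `n` (0-indexed). -/
noncomputable def epsSign (n : ℕ) (i : Fin (2 * n)) : ℂ :=
  if (i : ℕ) < n then 1 else -1

/-- The twisted symplectic generator
`F(i,j,r) = e(i,j,r) - ε(i)ε(j) e(j',i',r)` with `i' = N+1-i` (0-indexed via `Fin.rev`),
modeling `F_{ij} t^{-r} = (E_{ij} - ε_iε_j E_{j'i'})t^{-r}` for the symplectic Lie algebra
`sp_{2n}` attached to the anti-symmetric anti-diagonal form. -/
noncomputable def spGen (n : ℕ) (i j : Fin (2 * n)) (r : ℤ) :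
    FreeAlgebra ℂ (Fin (2 * n) × Fin (2 * n) × ℤ) :=
  FreeAlgebra.ι ℂ (i, j, r) -
    (epsSign n i * epsSign n j) • FreeAlgebra.ι ℂ (j.rev, i.rev, r)

/-- The permutation matrix `P_σ` acting on `(ℂ^{2n})^{⊗m}`. -/
noncomputable def permMatC (n m : ℕ) (σ : Equiv.Perm (Fin m)) :
    Matrix (Fin m → Fin (2 * n)) (Fin m → Fin (2 * n))
      (FreeAlgebra ℂ (Fin (2 * n) × Fin (2 * n) × ℤ)) :=
  Matrix.of fun f g => if g = fun j => f (σ j) then 1 else 0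

/-- The matrix `F[-λ_k]_{k,m}` acting in the `k`-th tensor slot (Type C). -/
noncomputable def FmatC (n m : ℕ) (lam : Fin m → ℤ) (k : Fin m) :
    Matrix (Fin m → Fin (2 * n)) (Fin m → Fin (2 * n))
      (FreeAlgebra ℂ (Fin (2 * n) × Fin (2 * n) × ℤ)) :=
  Matrix.of fun f g =>
    if ∀ j : Fin m, j ≠ k → f j = g j then spGen n (f k) (g k) (lam k) else 0

lemma FmatC_prod_apply (n m : ℕ) (lam : Fin m → ℤ) (L : List (Fin m)) (hL : L.Nodup)
    (f g : Fin m → Fin (2 * n)) :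
    (L.map (FmatC n m lam)).prod f g =
      if ∀ j ∉ L, f j = g j then (L.map fun k => spGen n (f k) (g k) (lam k)).prod else 0 := by
  induction L generalizing f with
  | nil =>
    simp only [List.map_nil, List.prod_nil, List.not_mem_nil]
    rw [Matrix.one_apply]
    simp [funext_iff]
  | cons k L ih =>
    rw [List.nodup_cons] at hL
    obtain ⟨hk, hnd⟩ := hL
    simp only [List.map_cons, List.prod_cons]
    rw [Matrix.mul_apply]
    rw [Finset.sum_eq_single (Function.update f k (g k))]
    · have h1 : FmatC n m lam k f (Function.update f k (g k)) = spGen n (f k) (g k) (lam k) := by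
        have hcond : ∀ j : Fin m, j ≠ k → f j = Function.update f k (g k) j := by
          intro j hj
          rw [Function.update_of_ne hj]
        rw [FmatC]
        simp only [Matrix.of_apply, if_pos hcond, Function.update_self]
      rw [h1, ih hnd]
      have h2 : (L.map fun k' => spGen n (Function.update f k (g k) k') (g k') (lam k')) =
          L.map fun k' => spGen n (f k') (g k') (lam k') := by
        apply List.map_congr_left
        intro a ha
        rw [Function.update_of_ne (fun h => hk (by rw [← h]; exact ha))]
      have h3 : (∀ j ∉ L, Function.update f k (g k) j = g j) ↔
          (∀ j ∉ k :: L, f j = g j) := by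
        constructor
        · intro h j hj
          rw [List.mem_cons, not_or] at hj
          have := h j hj.2
          rwa [Function.update_of_ne hj.1] at this
        · intro h j hj
          by_cases hjk : j = k
          · subst hjk; rw [Function.update_self]
          · rw [Function.update_of_ne hjk]
            exact h j (by simp [hjk, hj])
      rw [h2, if_congr h3 rfl rfl, mul_ite, mul_zero]
    · intro h _ hne
      by_cases hc : ∀ j, j ≠ k → f j = h j
      · have hupd : h = Function.update f k (h k) := by
          funext j
          by_cases hjk : j = k
          · subst hjk; rw [Function.update_self]
          · rw [Function.update_of_ne hjk, hc j hjk]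
        rw [ih hnd]
        have : ¬ ∀ j ∉ L, h j = g j := by
          intro hall
          apply hne
          have hkg : h k = g k := hall k hk
          rw [hupd, hkg]
        rw [if_neg this, mul_zero]
      · have : FmatC n m lam k f h = 0 := by simp only [FmatC, Matrix.of_apply, if_neg hc]
        rw [this, zero_mul]
    · intro h; exact absurd (Finset.mem_univ _) h

/-- Basis-free realization of Molev's full partial trace
`tr_{1,…,m} P_σ F[-λ_1]_{1,m} ⋯ F[-λ_m]_{m,m}` in Type C. -/
theorem trace_permMat_mul_FmatProd_symplectic (n m : ℕ) (hn : 1 ≤ n) (hm : 1 ≤ m)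
    (σ : Equiv.Perm (Fin m)) (lam : Fin m → ℤ) :
    Matrix.trace (permMatC n m σ * (List.ofFn fun k => FmatC n m lam k).prod) =
      ∑ i : Fin m → Fin (2 * n),
        (List.ofFn fun k => spGen n (i k) (i (σ⁻¹ k)) (lam k)).prod := by
  have hofn : (List.ofFn fun k => FmatC n m lam k) = (List.finRange m).map (FmatC n m lam) :=
    List.ofFn_eq_map
  rw [Matrix.trace]
  have hdiag : ∀ f : Fin m → Fin (2 * n),
      (permMatC n m σ * (List.ofFn fun k => FmatC n m lam k).prod).diag f =
        (List.ofFn fun k => spGen n (f (σ k)) (f k) (lam k)).prod := by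
    intro f
    rw [Matrix.diag, Matrix.mul_apply]
    have hterm : ∀ g, permMatC n m σ f g * ((List.ofFn fun k => FmatC n m lam k).prod) g f =
        if g = (fun j => f (σ j)) then ((List.ofFn fun k => FmatC n m lam k).prod) g f else 0 := by
      intro g
      rw [permMatC]
      simp only [Matrix.of_apply, ite_mul, one_mul, zero_mul]
    simp only [hterm]
    rw [Finset.sum_ite_eq' Finset.univ (fun j => f (σ j))
      (fun g => ((List.ofFn fun k => FmatC n m lam k).prod) g f)]
    rw [if_pos (Finset.mem_univ _), hofn,
      FmatC_prod_apply n m lam (List.finRange m) (List.nodup_finRange m)]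
    rw [if_pos (by intro j hj; exact absurd (List.mem_finRange j) hj)]
    rw [← List.ofFn_eq_map]
  simp only [hdiag]
  refine Fintype.sum_equiv (Equiv.arrowCongr σ.symm (Equiv.refl (Fin (2 * n)))) _ _ ?_
  intro f
  congr 1
  congr 1
  funext k
  simp [Equiv.arrowCongr]
end

section
/- Let m₀, n₀ ∈ ℕ, let M be an n₀ × m₀ matrix with entries in ℂ(T) such that the ℂ(T)-linear map v ↦ M·v from ℂ(T)^{m₀} to ℂ(T)^{n₀} is injective, and let w ∈ ℂ(T)^{n₀}. Suppose there exists N₀ ∈ ℕ such that for every natural number N ≥ N₀, all entries of M and all entries of w are defined at N and there exists a vector c ∈ ℂ^{m₀} with M(N)·c = w(N), where M(N) and w(N) denote entrywise evaluation at N. Then there exists v ∈ ℂ(T)^{m₀} with M·v = w. -/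
/-!
If `M v = w` had no solution over `ℂ(T)`, a linear functional would separate `w` from the range
of `M`: a covector `u` with `u M = 0` and `u · w ≠ 0`. Only finitely many points are poles of
some `uᵢ` or zeros of `u · w`, so at a large natural number `N` evaluation commutes with the
products and sums involved, and `u(N) · w(N) = u(N) M(N) c = 0` contradicts `u(N) · w(N) ≠ 0`.
-/

/-- A rational function over `ℂ` is defined at `z` if its (reduced) denominator does
not vanish at `z`. -/
def RatFuncDefinedAt (p : RatFunc ℂ) (z : ℂ) : Prop :=
  Polynomial.eval z p.denom ≠ 0

/-- Evaluation of a rational function over `ℂ` at `z`. -/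
noncomputable def ratFuncEval (p : RatFunc ℂ) (z : ℂ) : ℂ :=
  RatFunc.eval (RingHom.id ℂ) z p

open Filter Matrix

theorem Matrix.exists_vecMul_eq_zero_and_dotProduct_ne_zero {K m n : Type*} [Field K]
    [Fintype m] [Fintype n] {M : Matrix n m K} {w : n → K}
    (hw : ∀ v, M *ᵥ v ≠ w) : ∃ u : n → K, u ᵥ* M = 0 ∧ u ⬝ᵥ w ≠ 0 := by
  classical
  have hw_range : w ∉ LinearMap.range M.mulVecLin := fun ⟨v, hv⟩ => hw v hv
  obtain ⟨f, hfw, hf_range⟩ := Submodule.exists_dual_map_eq_bot_of_notMem hw_range inferInstance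
  set u := (dotProductEquiv K n).symm f
  have hu : ∀ x, u ⬝ᵥ x = f x := fun x => by
    rw [← dotProductEquiv_apply_apply, LinearEquiv.apply_symm_apply]
  refine ⟨u, dotProduct_eq_zero _ fun v => ?_, hu w ▸ hfw⟩
  rw [← dotProduct_mulVec, hu, ← Submodule.mem_bot K, ← hf_range]
  exact Submodule.mem_map_of_mem ⟨v, rfl⟩

section

variable {x y : RatFunc ℂ} {z : ℂ}

theorem RatFuncDefinedAt.add (hx : RatFuncDefinedAt x z) (hy : RatFuncDefinedAt y z) :
    RatFuncDefinedAt (x + y) z := fun h =>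
  mul_ne_zero hx hy (by
    rw [← Polynomial.eval_mul]
    exact Polynomial.eval_eq_zero_of_dvd_of_eval_eq_zero (RatFunc.denom_add_dvd x y) h)

theorem RatFuncDefinedAt.mul (hx : RatFuncDefinedAt x z) (hy : RatFuncDefinedAt y z) :
    RatFuncDefinedAt (x * y) z := fun h =>
  mul_ne_zero hx hy (by
    rw [← Polynomial.eval_mul]
    exact Polynomial.eval_eq_zero_of_dvd_of_eval_eq_zero (RatFunc.denom_mul_dvd x y) h)

@[simp]
theorem ratFuncEval_zero (z : ℂ) : ratFuncEval 0 z = 0 := RatFunc.eval_zero _ _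

theorem ratFuncEval_add (hx : RatFuncDefinedAt x z) (hy : RatFuncDefinedAt y z) :
    ratFuncEval (x + y) z = ratFuncEval x z + ratFuncEval y z :=
  RatFunc.eval_add _ _ hx hy

theorem ratFuncEval_mul (hx : RatFuncDefinedAt x z) (hy : RatFuncDefinedAt y z) :
    ratFuncEval (x * y) z = ratFuncEval x z * ratFuncEval y z :=
  RatFunc.eval_mul _ _ hx hy

end

section

variable {ι : Type*} {s : Finset ι} {p : ι → RatFunc ℂ} {z : ℂ}

theorem RatFuncDefinedAt.sum (hp : ∀ i ∈ s, RatFuncDefinedAt (p i) z) :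
    RatFuncDefinedAt (∑ i ∈ s, p i) z :=
  Finset.sum_induction _ (RatFuncDefinedAt · z) (fun _ _ => .add) (by simp [RatFuncDefinedAt]) hp

theorem ratFuncEval_sum (hp : ∀ i ∈ s, RatFuncDefinedAt (p i) z) :
    ratFuncEval (∑ i ∈ s, p i) z = ∑ i ∈ s, ratFuncEval (p i) z := by
  classical
  induction s using Finset.induction_on with
  | empty => simp
  | insert i s hi ih =>
    rw [Finset.forall_mem_insert] at hp
    rw [Finset.sum_insert hi, Finset.sum_insert hi, ratFuncEval_add hp.1 (.sum hp.2), ih hp.2]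

end

section

variable {ι : Type*} [Fintype ι] {u v : ι → RatFunc ℂ} {z : ℂ}

theorem ratFuncEval_dotProduct (hu : ∀ i, RatFuncDefinedAt (u i) z)
    (hv : ∀ i, RatFuncDefinedAt (v i) z) :
    ratFuncEval (u ⬝ᵥ v) z = (fun i => ratFuncEval (u i) z) ⬝ᵥ fun i => ratFuncEval (v i) z := by
  rw [dotProduct, ratFuncEval_sum fun i _ => (hu i).mul (hv i)]
  exact Finset.sum_congr rfl fun i _ => ratFuncEval_mul (hu i) (hv i)

end

theorem ratFuncEval_vecMul {m n : Type*} [Fintype n] {u : n → RatFunc ℂ}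
    {M : Matrix n m (RatFunc ℂ)} {z : ℂ} (hu : ∀ i, RatFuncDefinedAt (u i) z)
    (hM : ∀ i j, RatFuncDefinedAt (M i j) z) :
    (fun i => ratFuncEval (u i) z) ᵥ* Matrix.of (fun i j => ratFuncEval (M i j) z) =
      fun j => ratFuncEval ((u ᵥ* M) j) z :=
  funext fun j => (ratFuncEval_dotProduct hu fun i => hM i j).symm

theorem eventually_cofinite_ratFuncDefinedAt (p : RatFunc ℂ) :
    ∀ᶠ z in cofinite, RatFuncDefinedAt p z :=
  Filter.eventually_cofinite.2 <| by
    simpa [RatFuncDefinedAt] using Polynomial.finite_setOfPred_isRoot p.denom_ne_zero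

theorem eventually_cofinite_ratFuncEval_ne_zero {p : RatFunc ℂ} (hp : p ≠ 0) :
    ∀ᶠ z in cofinite, ratFuncEval p z ≠ 0 := by
  have hnum : ∀ᶠ z in cofinite, Polynomial.eval z p.num ≠ 0 := Filter.eventually_cofinite.2 <| by
    simpa using Polynomial.finite_setOfPred_isRoot (RatFunc.num_ne_zero hp)
  filter_upwards [hnum, eventually_cofinite_ratFuncDefinedAt p] with z hz hdz
  exact div_ne_zero hz hdz

theorem tendsto_natCast_atTop_cofinite {R : Type*} [AddMonoidWithOne R] [CharZero R] :
    Tendsto (Nat.cast : ℕ → R) atTop cofinite :=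
  Nat.cofinite_eq_atTop ▸ Nat.cast_injective.tendsto_cofinite

theorem exists_solution_of_eventually_eval_solvable_general
    (m₀ n₀ : ℕ) (M : Matrix (Fin n₀) (Fin m₀) (RatFunc ℂ))
    (w : Fin n₀ → RatFunc ℂ)
    (h : ∃ N₀ : ℕ, ∀ N : ℕ, N₀ ≤ N →
      (∀ i j, RatFuncDefinedAt (M i j) (N : ℂ)) ∧
      (∀ i, RatFuncDefinedAt (w i) (N : ℂ)) ∧
      ∃ c : Fin m₀ → ℂ,
        (Matrix.of fun i j => ratFuncEval (M i j) (N : ℂ)).mulVec c =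
          fun i => ratFuncEval (w i) (N : ℂ)) :
    ∃ v : Fin m₀ → RatFunc ℂ, M.mulVec v = w := by
  obtain ⟨N₀, hN₀⟩ := h
  by_contra! hw
  obtain ⟨u, huM, huw⟩ := exists_vecMul_eq_zero_and_dotProduct_ne_zero hw
  have hgood : ∀ᶠ z in cofinite, (∀ i, RatFuncDefinedAt (u i) z) ∧ ratFuncEval (u ⬝ᵥ w) z ≠ 0 :=
    (eventually_all.2 fun i => eventually_cofinite_ratFuncDefinedAt (u i)).and
      (eventually_cofinite_ratFuncEval_ne_zero huw)
  obtain ⟨N, hN, hu, hne⟩ :=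
    ((eventually_ge_atTop N₀).and (tendsto_natCast_atTop_cofinite.eventually hgood)).exists
  obtain ⟨hMN, hwN, c, hc⟩ := hN₀ N hN
  apply hne
  rw [ratFuncEval_dotProduct hu hwN, ← hc, dotProduct_mulVec, ratFuncEval_vecMul hu hMN, huM]
  simp

/-- Interpolation lemma: if an injective `ℂ(T)`-linear system `M · v = w` is solvable
over `ℂ` after evaluation at every sufficiently large natural number, then it is
solvable over `ℂ(T)`. -/
theorem exists_solution_of_eventually_eval_solvable
    (m₀ n₀ : ℕ) (M : Matrix (Fin n₀) (Fin m₀) (RatFunc ℂ))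
    (hM : Function.Injective M.mulVec)
    (w : Fin n₀ → RatFunc ℂ)
    (h : ∃ N₀ : ℕ, ∀ N : ℕ, N₀ ≤ N →
      (∀ i j, RatFuncDefinedAt (M i j) (N : ℂ)) ∧
      (∀ i, RatFuncDefinedAt (w i) (N : ℂ)) ∧
      ∃ c : Fin m₀ → ℂ,
        (Matrix.of fun i j => ratFuncEval (M i j) (N : ℂ)).mulVec c =
          fun i => ratFuncEval (w i) (N : ℂ)) :
    ∃ v : Fin m₀ → RatFunc ℂ, M.mulVec v = w :=
  exists_solution_of_eventually_eval_solvable_general m₀ n₀ M w h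
end

section
/- Let u : ℕ → A satisfy u(0) = 1 and, for every r ≥ 1, the self-adjointness relation u(r) = Σ_{k=0}^{r} (−1)^k · binom(t − k, r − k) · d^{r−k}(u(k)). Then u(1) = 0 and, for every n ∈ ℕ, the odd coefficient u(2n+1) lies in the ℚ-subalgebra of A generated by t together with the elements d^a(u(2k)) for all a ∈ ℕ and 1 ≤ k ≤ n. (Equivalently: the odd coefficients of a monic self-adjoint pseudodifferential symbol of complex order are differential polynomials, with coefficients that are polynomials in t, in the even coefficients.) -/
/-- The generalized binomial coefficient `binom(x, j) = (1/j!) ∏_{i=0}^{j-1} (x - i)`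
in a `ℚ`-algebra. -/
noncomputable def genBinom (A : Type*) [CommRing A] [Algebra ℚ A] (x : A) (j : ℕ) : A :=
  algebraMap ℚ A (1 / j.factorial) * ∏ i ∈ Finset.range j, (x - (i : A))

/-- If `u : ℕ → A` are the coefficients of a monic self-adjoint pseudodifferential
symbol of complex order `t`, i.e. `u 0 = 1` and
`u r = Σ_{k=0}^{r} (-1)^k binom(t - k, r - k) d^{r-k}(u k)` for all `r ≥ 1`, then
`u 1 = 0` and every odd coefficient `u (2n+1)` is a differential polynomial (with
coefficients polynomial in `t`) in the even coefficients `u 2, u 4, …, u (2n)`. -/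
theorem selfAdjoint_odd_coeff_mem_adjoin_even
    (A : Type*) [CommRing A] [Algebra ℚ A]
    (d : Derivation ℚ A A) (t : A) (ht : d t = 0)
    (u : ℕ → A) (hu0 : u 0 = 1)
    (hrel : ∀ r : ℕ, 1 ≤ r → u r =
      ∑ k ∈ Finset.range (r + 1),
        (-1 : A) ^ k * genBinom A (t - (k : A)) (r - k) * (⇑d)^[r - k] (u k)) :
    u 1 = 0 ∧ ∀ n : ℕ, u (2 * n + 1) ∈
      Algebra.adjoin ℚ
        ({t} ∪ {y : A | ∃ a k : ℕ, 1 ≤ k ∧ k ≤ n ∧ y = (⇑d)^[a] (u (2 * k))}) := by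
  -- iterated derivative of u 0 vanishes
  have hd0 : ∀ m : ℕ, 1 ≤ m → (⇑d)^[m] (u 0) = 0 := by
    intro m hm
    obtain ⟨a, rfl⟩ := Nat.exists_eq_add_of_le hm
    rw [hu0, add_comm, Function.iterate_succ_apply, d.map_one_eq_zero,
      Function.iterate_fixed d.map_zero]
  -- the "halved" relation for odd r
  have hhalf : ∀ r : ℕ, Odd r → u r = (1/2 : ℚ) •
      ∑ k ∈ Finset.range r,
        (-1 : A) ^ k * genBinom A (t - (k : A)) (r - k) * (⇑d)^[r - k] (u k) := by
    intro r hr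
    have hr1 : 1 ≤ r := hr.pos
    have h := hrel r hr1
    rw [Finset.sum_range_succ] at h
    have hg : genBinom A (t - (r : A)) 0 = 1 := by
      simp [genBinom]
    rw [Nat.sub_self, hg, hr.neg_one_pow] at h
    simp only [Function.iterate_zero_apply] at h
    have h2 : (2 : ℚ) • u r =
        ∑ k ∈ Finset.range r,
          (-1 : A) ^ k * genBinom A (t - (k : A)) (r - k) * (⇑d)^[r - k] (u k) := by
      have : u r + u r =
          ∑ k ∈ Finset.range r,
            (-1 : A) ^ k * genBinom A (t - (k : A)) (r - k) * (⇑d)^[r - k] (u k) := by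
        linear_combination h
      rw [two_smul]; exact this
    calc u r = (1/2 : ℚ) • ((2 : ℚ) • u r) := by
              rw [smul_smul]; norm_num
      _ = _ := by rw [h2]
  have hu1 : u 1 = 0 := by
    have h := hhalf 1 odd_one
    rw [Finset.sum_range_one] at h
    rw [h, hd0 1 le_rfl]
    simp
  refine ⟨hu1, fun n => ?_⟩
  set s : Set A :=
    {t} ∪ {y : A | ∃ a k : ℕ, 1 ≤ k ∧ k ≤ n ∧ y = (⇑d)^[a] (u (2 * k))} with hs
  -- the adjoin is stable under d
  have hstable : ∀ x ∈ Algebra.adjoin ℚ s, d x ∈ Algebra.adjoin ℚ s := by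
    intro x hx
    induction hx using Algebra.adjoin_induction with
    | mem x hx =>
        rcases hx with hx | ⟨a, k, hk1, hkn, rfl⟩
        · rw [Set.mem_singleton_iff] at hx
          rw [hx, ht]; exact zero_mem _
        · have : d ((⇑d)^[a] (u (2 * k))) = (⇑d)^[a + 1] (u (2 * k)) := by
            rw [Function.iterate_succ_apply']
          rw [this]
          exact Algebra.subset_adjoin (Or.inr ⟨a + 1, k, hk1, hkn, rfl⟩)
    | algebraMap r => rw [d.map_algebraMap]; exact zero_mem _
    | add x y hx hy ihx ihy => rw [d.map_add]; exact add_mem ihx ihy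
    | mul x y hx hy ihx ihy =>
        rw [d.leibniz, smul_eq_mul, smul_eq_mul]
        exact add_mem (mul_mem hx ihy) (mul_mem hy ihx)
  have hstable' : ∀ (a : ℕ) (x : A), x ∈ Algebra.adjoin ℚ s →
      (⇑d)^[a] x ∈ Algebra.adjoin ℚ s := by
    intro a
    induction a with
    | zero => intro x hx; simpa using hx
    | succ a ih =>
        intro x hx
        rw [Function.iterate_succ_apply]
        exact ih _ (hstable x hx)
  have ht' : t ∈ Algebra.adjoin ℚ s := Algebra.subset_adjoin (Or.inl rfl)
  -- generalized binomial coefficients in t belong to the adjoin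
  have hbin : ∀ (m j : ℕ), genBinom A (t - (m : A)) j ∈ Algebra.adjoin ℚ s := by
    intro m j
    refine mul_mem (algebraMap_mem _ _) (prod_mem fun i _ => ?_)
    exact sub_mem (sub_mem ht' (natCast_mem _ m)) (natCast_mem _ i)
  -- main claim by strong induction
  have key : ∀ r : ℕ, Odd r → r ≤ 2 * n + 1 → u r ∈ Algebra.adjoin ℚ s := by
    intro r
    induction r using Nat.strong_induction_on with
    | _ r ih =>
      intro hodd hle
      rw [hhalf r hodd]
      refine SMulMemClass.smul_mem _ (sum_mem fun k hk => ?_)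
      · rw [Finset.mem_range] at hk
        refine mul_mem (mul_mem ?_ (hbin k (r - k))) ?_
        · exact pow_mem (neg_mem (one_mem _)) k
        · rcases Nat.even_or_odd k with hke | hko
          · obtain ⟨j, rfl⟩ := hke
            rcases Nat.eq_zero_or_pos j with rfl | hj
            · rw [hd0 (r - 0) (by omega)]
              exact zero_mem _
            · have hjn : j ≤ n := by omega
              exact Algebra.subset_adjoin
                (Or.inr ⟨r - (j + j), j, hj, hjn, by rw [two_mul]⟩)
          · exact hstable' _ _ (ih k hk hko (by omega))
  exact key (2 * n + 1) ⟨n, by ring⟩ le_rfl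
end
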